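/- If I is a nonempty indexing set and 𝒰_i is a frame-generating join-specification for a poset P for each i ∈ I, then ⋃_I 𝒰_i is frame-generating. -/
import Mathlib


variable {P : Type*} [PartialOrder P]

/-- Down-closure of a set. -/
def dcl (S : Set P) : Set P := {p | ∃ s ∈ S, p ≤ s}

/-- Principal downset. -/
def pd (p : P) : Set P := {q | q ≤ p}

/-- Standard closure operator: extensive, monotone, idempotent, with Γ({p}) = p↓. -/
def IsStdClosure (Γ : Set P → Set P) : Prop :=
  (∀ S, S ⊆ Γ S) ∧ (∀ S T : Set P, S ⊆ T → Γ S ⊆ Γ T) ∧ (∀ S, Γ (Γ S) = Γ S) ∧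
    ∀ p : P, Γ {p} = pd p

def IsClosedIn (Γ : Set P → Set P) (C : Set P) : Prop := Γ C = C

/-- Join-specification: all joins of members exist, and all singletons belong. -/
def IsJoinSpec (𝒰 : Set (Set P)) : Prop :=
  (∀ S ∈ 𝒰, ∃ x : P, IsLUB S x) ∧ ∀ p : P, {p} ∈ 𝒰

/-- 𝒰-ideal: down-closed and closed under joins of members of 𝒰. -/
def IsUIdeal (𝒰 : Set (Set P)) (I : Set P) : Prop :=
  IsLowerSet I ∧ ∀ S ∈ 𝒰, S ⊆ I → ∀ x : P, IsLUB S x → x ∈ I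

/-- The smallest 𝒰-ideal containing S. -/
def GammaU (𝒰 : Set (Set P)) (S : Set P) : Set P :=
  ⋂₀ {I : Set P | IsUIdeal 𝒰 I ∧ S ⊆ I}

/-- 𝒰⁺: sets whose join exists and lies in the 𝒰-ideal closure. -/
def UPlus (𝒰 : Set (Set P)) : Set (Set P) :=
  {S : Set P | ∃ x : P, IsLUB S x ∧ x ∈ GammaU 𝒰 S}

/-- Υ_𝒰(S) = { ⋁T : T ∈ 𝒰⁺, T ⊆ S↓ }. -/
def Upsilon (𝒰 : Set (Set P)) (S : Set P) : Set P :=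
  {x : P | ∃ T ∈ UPlus 𝒰, T ⊆ dcl S ∧ IsLUB T x}

/-- The complete lattice of 𝒰-ideals (meets = intersections, joins = closure of unions)
is a frame. -/
def IdealFrame (𝒰 : Set (Set P)) : Prop :=
  ∀ D : Set P, IsUIdeal 𝒰 D → ∀ 𝒞 : Set (Set P), (∀ C ∈ 𝒞, IsUIdeal 𝒰 C) →
    D ∩ GammaU 𝒰 (⋃₀ 𝒞) = GammaU 𝒰 (⋃ C ∈ 𝒞, D ∩ C)

/-- The complete lattice of Γ-closed sets is a frame. -/
def ClosFrame (Γ : Set P → Set P) : Prop :=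
  ∀ D : Set P, IsClosedIn Γ D → ∀ 𝒞 : Set (Set P), (∀ C ∈ 𝒞, IsClosedIn Γ C) →
    D ∩ Γ (⋃₀ 𝒞) = Γ (⋃ C ∈ 𝒞, D ∩ C)

lemma gammaU_isIdeal (𝒰 : Set (Set P)) (S : Set P) : IsUIdeal 𝒰 (GammaU 𝒰 S) := by
  constructor
  · intro a b hba ha I hI
    exact hI.1.1 hba (ha I hI)
  · intro T hT hTsub x hx I hI
    exact hI.1.2 T hT (fun t ht => hTsub ht I hI) x hx

lemma subset_gammaU (𝒰 : Set (Set P)) (S : Set P) : S ⊆ GammaU 𝒰 S := by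
  intro s hs I hI
  exact hI.2 hs

lemma gammaU_subset {𝒰 : Set (Set P)} {S I : Set P} (hI : IsUIdeal 𝒰 I) (h : S ⊆ I) :
    GammaU 𝒰 S ⊆ I := fun x hx => hx I ⟨hI, h⟩

lemma isUIdeal_mono {𝒰 𝒱 : Set (Set P)} (h : 𝒰 ⊆ 𝒱) {I : Set P} (hI : IsUIdeal 𝒱 I) :
    IsUIdeal 𝒰 I := ⟨hI.1, fun S hS => hI.2 S (h hS)⟩

lemma isUIdeal_pd (𝒰 : Set (Set P)) (p : P) : IsUIdeal 𝒰 (pd p) := by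
  constructor
  · intro a b hba ha
    exact le_trans hba ha
  · intro S _ hS x hx
    exact hx.2 (fun s hs => hS hs)

lemma isUIdeal_inter {𝒰 : Set (Set P)} {I J : Set P} (hI : IsUIdeal 𝒰 I)
    (hJ : IsUIdeal 𝒰 J) : IsUIdeal 𝒰 (I ∩ J) := by
  constructor
  · intro a b hba ha
    exact ⟨hI.1 hba ha.1, hJ.1 hba ha.2⟩
  · intro S hS hsub x hx
    exact ⟨hI.2 S hS (fun s hs => (hsub hs).1) x hx, hJ.2 S hS (fun s hs => (hsub hs).2) x hx⟩

theorem stmt16 {ι : Type*} [Nonempty ι] (𝒰 : ι → Set (Set P))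
    (hU : ∀ i, IsJoinSpec (𝒰 i)) (hf : ∀ i, IdealFrame (𝒰 i)) :
    IsJoinSpec (⋃ i, 𝒰 i) ∧ IdealFrame (⋃ i, 𝒰 i) := by
  set 𝒱 : Set (Set P) := ⋃ i, 𝒰 i with h𝒱
  refine ⟨⟨?_, ?_⟩, ?_⟩
  · intro S hS
    obtain ⟨i, hi⟩ := Set.mem_iUnion.mp hS
    exact (hU i).1 S hi
  · intro p
    exact Set.mem_iUnion.mpr ⟨Classical.arbitrary ι, (hU (Classical.arbitrary ι)).2 p⟩
  · intro D hD 𝒞 h𝒞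
    set G : Set P := GammaU 𝒱 (⋃ C ∈ 𝒞, D ∩ C) with hG
    set M : Set P := {x | ∀ d ∈ D, d ≤ x → d ∈ G} with hM
    have hGideal : IsUIdeal 𝒱 G := gammaU_isIdeal 𝒱 _
    have hMideal : IsUIdeal 𝒱 M := by
      constructor
      · intro a b hba ha d hd hdb
        exact ha d hd (le_trans hdb hba)
      · intro S hS hSM x hx d hd hdx
        obtain ⟨i, hSi⟩ := Set.mem_iUnion.mp hS
        set 𝒞' : Set (Set P) := pd '' S with h𝒞'
        have h𝒞'id : ∀ C ∈ 𝒞', IsUIdeal (𝒰 i) C := by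
          rintro C ⟨s, _, rfl⟩
          exact isUIdeal_pd (𝒰 i) s
        have hxG : x ∈ GammaU (𝒰 i) (⋃₀ 𝒞') := by
          refine (gammaU_isIdeal (𝒰 i) _).2 S hSi ?_ x hx
          intro s hs
          exact subset_gammaU (𝒰 i) _ ⟨pd s, ⟨s, hs, rfl⟩, le_refl s⟩
        have hdG' : d ∈ D ∩ GammaU (𝒰 i) (⋃₀ 𝒞') :=
          ⟨hd, (gammaU_isIdeal (𝒰 i) _).1 hdx hxG⟩
        rw [hf i D (isUIdeal_mono (Set.subset_iUnion 𝒰 i) hD) 𝒞' h𝒞'id] at hdG'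
        refine gammaU_subset (isUIdeal_mono (Set.subset_iUnion 𝒰 i) hGideal) ?_ hdG'
        rintro y hy
        simp only [Set.mem_iUnion] at hy
        obtain ⟨C, ⟨s, hs, rfl⟩, hyD, hys⟩ := hy
        exact hSM hs y hyD hys
    apply Set.Subset.antisymm
    · rintro x ⟨hxD, hxG⟩
      have h𝒞M : ⋃₀ 𝒞 ⊆ M := by
        rintro c ⟨C, hC, hcC⟩ d hd hdc
        exact subset_gammaU 𝒱 _ (Set.mem_biUnion hC ⟨hd, (h𝒞 C hC).1 hdc hcC⟩)
      exact gammaU_subset hMideal h𝒞M hxG x hxD (le_refl x)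
    · refine gammaU_subset (isUIdeal_inter hD (gammaU_isIdeal 𝒱 _)) ?_
      rintro y hy
      simp only [Set.mem_iUnion] at hy
      obtain ⟨C, hC, hyD, hyC⟩ := hy
      exact ⟨hyD, subset_gammaU 𝒱 _ ⟨C, hC, hyC⟩⟩
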